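/- arXiv:1907.12475 — 2 statements merged into one kernel-verified Lean document; each statement's English description precedes it below -/
import Mathlib

section
/- Let m be a positive integer, 0 < ε < 1, 0 < δ < 1, and let G_1, …, G_m be independent identically distributed real-valued random variables on a probability space such that P(G_i < q) = 1 − ε and P(G_i = q) = 0 for a fixed real number q. Suppose j* = min{ j ∈ {1, …, m} : Σ_{k=0}^{j−1} C(m,k) (1−ε)^k ε^{m−k} ≥ 1 − δ } exists. Then the j*-th order statistic satisfies P(G_(j*) ≥ q) ≥ 1 − δ; that is, G_(j*) is an upper bound of the (1−ε)-quantile q with confidence at least 1 − δ. -/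
/-!
Let `N ω` be the number of indices `i` with `G i ω < q`. If `N ω ≤ j`, the sorted sample is `≥ q`
from position `j` on, since otherwise its first `j + 1` entries would be `j + 1` samples below `q`.
The events `{G i < q}` are independent of probability `1 - ε`, so `N` is binomial and
`P(N ≤ j) = Σ_{k ≤ j} C(m,k) (1-ε)^k ε^(m-k)`, which is at least `1 - δ` for `j = jstar`.
-/

open MeasureTheory ProbabilityTheory Finset
open scoped ENNReal

theorem Tuple.le_sort_of_card_filter_lt_le {α : Type*} [LinearOrder α] {n : ℕ} (f : Fin n → α)
    (q : α) (j : Fin n) (h : #{i | f i < q} ≤ j) : q ≤ f (Tuple.sort f j) := by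
  by_contra! hq
  have hsub : (Iic j).map (Tuple.sort f).toEmbedding ⊆ ({i | f i < q} : Finset _) := by
    intro i hi
    obtain ⟨k, hk, rfl⟩ := mem_map.1 hi
    exact (mem_filter_univ _).2 ((Tuple.monotone_sort f (mem_Iic.1 hk)).trans_lt hq)
  have hcard := card_le_card hsub
  rw [card_map, Fin.card_Iic] at hcard
  omega

theorem Finset.sum_filter_card_le_eq_sum_range_choose {ι M : Type*} [Fintype ι] [DecidableEq ι]
    [AddCommMonoid M] (f : ℕ → M) (j : ℕ) :
    ∑ S : Finset ι with #S ≤ j, f #S = ∑ k ∈ range (j + 1), (Fintype.card ι).choose k • f k := by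
  rw [← sum_fiberwise_of_maps_to' (t := range (j + 1)) (g := card)
    (fun S hS => mem_range_succ_iff.2 (mem_filter.1 hS).2)]
  refine sum_congr rfl fun k hk => ?_
  have hfiber : ({S ∈ ({S | #S ≤ j} : Finset (Finset ι)) | #S = k}) = univ.powersetCard k := by
    ext S
    simp only [mem_filter, mem_univ, true_and, mem_powersetCard_univ, and_iff_right_iff_imp]
    exact fun h => h ▸ mem_range_succ_iff.1 hk
  rw [sum_const, hfiber, card_powersetCard, card_univ]

namespace ProbabilityTheory

theorem iIndepFun.iIndepSet_preimage {Ω ι β : Type*} [MeasurableSpace Ω] [MeasurableSpace β]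
    {μ : Measure Ω} {X : ι → Ω → β} (hX : iIndepFun X μ) (hXmeas : ∀ i, Measurable (X i))
    {s : ι → Set β} (hs : ∀ i, MeasurableSet (s i)) : iIndepSet (fun i => X i ⁻¹' s i) μ :=
  ((iIndepFun_iff_iIndep _ _ _).1 hX).iIndepSets'.iIndepSet_of_mem
    (fun i => comap_measurable (X i) (hs i)) fun i => hXmeas i (hs i)

variable {Ω ι : Type*} [Fintype ι] [DecidableEq ι] {A : ι → Set Ω} [∀ i, DecidablePred (· ∈ A i)]

theorem setOf_filter_mem_eq_iInter (S : Finset ι) :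
    {ω | ({i | ω ∈ A i} : Finset ι) = S} = ⋂ i, if i ∈ S then A i else (A i)ᶜ := by
  ext ω
  simp only [Set.mem_ofPred_eq, Set.mem_iInter, Finset.ext_iff, mem_filter_univ]
  refine forall_congr' fun i => ?_
  split_ifs with hi <;> simp [hi]

variable [MeasurableSpace Ω] {μ : Measure Ω} {p : ℝ≥0∞}

theorem iIndepSet.measure_filter_mem_eq (hA : iIndepSet A μ) (hmeas : ∀ i, MeasurableSet (A i))
    (hp : ∀ i, μ (A i) = p) (S : Finset ι) :
    μ {ω | ({i | ω ∈ A i} : Finset ι) = S} = p ^ #S * (1 - p) ^ (Fintype.card ι - #S) := by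
  have := hA.isProbabilityMeasure
  have hgen : ∀ i, MeasurableSet[MeasurableSpace.generateFrom {A i}]
      (if i ∈ S then A i else (A i)ᶜ) := fun i => by
    have := MeasurableSpace.measurableSet_generateFrom (Set.mem_singleton (A i))
    split_ifs
    exacts [this, this.compl]
  rw [setOf_filter_mem_eq_iInter, ((iIndepSet_iff_iIndep _ _).1 hA).meas_iInter hgen]
  simp only [apply_ite μ, prob_compl_eq_one_sub (hmeas _), hp]
  rw [prod_ite, filter_not, filter_mem_eq_of_subset (subset_univ S), prod_const, prod_const,
    card_sdiff_of_subset (subset_univ S), card_univ]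

theorem iIndepSet.measure_card_filter_mem_le (hA : iIndepSet A μ)
    (hmeas : ∀ i, MeasurableSet (A i)) (hp : ∀ i, μ (A i) = p) (j : ℕ) :
    μ {ω | #({i | ω ∈ A i} : Finset ι) ≤ j} =
      ∑ k ∈ range (j + 1), (Fintype.card ι).choose k * p ^ k * (1 - p) ^ (Fintype.card ι - k) := by
  have hfiber : ∀ S : Finset ι, MeasurableSet {ω | ({i | ω ∈ A i} : Finset ι) = S} := fun S => by
    rw [setOf_filter_mem_eq_iInter]
    exact .iInter fun i => by split_ifs; exacts [hmeas i, (hmeas i).compl]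
  have hpre : {ω | #({i | ω ∈ A i} : Finset ι) ≤ j} =
      (fun ω => ({i | ω ∈ A i} : Finset ι)) ⁻¹' ↑({S | #S ≤ j} : Finset (Finset ι)) := by
    ext; simp
  rw [hpre, ← sum_measure_preimage_singleton _ fun S _ => hfiber S]
  simp only [Set.preimage, Set.mem_singleton_iff, hA.measure_filter_mem_eq hmeas hp]
  rw [sum_filter_card_le_eq_sum_range_choose (fun k => p ^ k * (1 - p) ^ (Fintype.card ι - k))]
  simp only [nsmul_eq_mul, mul_assoc]

end ProbabilityTheory

/-- `jstar` is 0-indexed: it is the paper's `j* - 1`, and `Tuple.sort _ jstar` picks `G_(j*)`. -/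
theorem prob_order_stat_jstar_ge_quantile_general
    {Ω : Type*} [MeasurableSpace Ω] (μ : Measure Ω)
    (m : ℕ) (ε δ : ℝ) (hε0 : 0 < ε) (hε1 : ε < 1) (q : ℝ)
    (G : Fin m → Ω → ℝ) (hGmeas : ∀ i, Measurable (G i))
    (hindep : iIndepFun G μ)
    (hlt : ∀ i, μ {ω | G i ω < q} = ENNReal.ofReal (1 - ε))
    (jstar : Fin m)
    (hjstar : IsLeast {j : Fin m |
      1 - δ ≤ ∑ k ∈ Finset.range ((j : ℕ) + 1),
        (m.choose k : ℝ) * (1 - ε) ^ k * ε ^ (m - k)} jstar) :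
    ENNReal.ofReal (1 - δ) ≤
      μ {ω | q ≤ G (Tuple.sort (fun i => G i ω) jstar) ω} := by
  have hA : iIndepSet (fun i => {ω | G i ω < q}) μ :=
    hindep.iIndepSet_preimage hGmeas fun _ => measurableSet_Iio
  have h1ε : 0 ≤ 1 - ε := by linarith
  have hcompl : 1 - ENNReal.ofReal (1 - ε) = ENNReal.ofReal ε := by
    rw [← ENNReal.ofReal_one, ← ENNReal.ofReal_sub _ h1ε, sub_sub_cancel]
  calc ENNReal.ofReal (1 - δ)
      ≤ ENNReal.ofReal (∑ k ∈ range (jstar + 1), m.choose k * (1 - ε) ^ k * ε ^ (m - k)) :=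
        ENNReal.ofReal_le_ofReal hjstar.1
    _ = ∑ k ∈ range (jstar + 1),
          m.choose k * ENNReal.ofReal (1 - ε) ^ k * (1 - ENNReal.ofReal (1 - ε)) ^ (m - k) := by
        rw [hcompl, ENNReal.ofReal_sum_of_nonneg fun k _ => by positivity]
        refine sum_congr rfl fun k _ => ?_
        rw [ENNReal.ofReal_mul (by positivity), ENNReal.ofReal_mul (by positivity),
          ENNReal.ofReal_pow h1ε, ENNReal.ofReal_pow hε0.le, ENNReal.ofReal_natCast]
    _ = μ {ω | #{i | G i ω < q} ≤ jstar} := by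
        have := hA.measure_card_filter_mem_le (fun i => hGmeas i measurableSet_Iio) hlt jstar
        rw [Fintype.card_fin] at this
        exact this.symm
    _ ≤ μ {ω | q ≤ G (Tuple.sort (fun i => G i ω) jstar) ω} :=
        measure_mono fun ω hω => Tuple.le_sort_of_card_filter_lt_le _ q jstar hω

/-- With `G 0, …, G (m-1)` i.i.d. real random variables such that
`P(G i < q) = 1 − ε` and `P(G i = q) = 0`, suppose
`jstar` is the least index `j` (0-indexed; `j+1` in the paper's 1-indexed convention)
such that `Σ_{k=0}^{j} C(m,k)(1−ε)^k ε^{m−k} ≥ 1 − δ`.  Then the corresponding order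
statistic, realized via `Tuple.sort` as `G (Tuple.sort (fun i => G i ω) jstar) ω`,
satisfies `P(G_(jstar) ≥ q) ≥ 1 − δ`. -/
theorem prob_order_stat_jstar_ge_quantile
    {Ω : Type*} [MeasurableSpace Ω] (μ : Measure Ω) [IsProbabilityMeasure μ]
    (m : ℕ) (hm : 0 < m) (ε δ : ℝ) (hε0 : 0 < ε) (hε1 : ε < 1)
    (hδ0 : 0 < δ) (hδ1 : δ < 1) (q : ℝ)
    (G : Fin m → Ω → ℝ) (hGmeas : ∀ i, Measurable (G i))
    (hindep : iIndepFun G μ)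
    (hident : ∀ i j, IdentDistrib (G i) (G j) μ μ)
    (hlt : ∀ i, μ {ω | G i ω < q} = ENNReal.ofReal (1 - ε))
    (heq : ∀ i, μ {ω | G i ω = q} = 0)
    (jstar : Fin m)
    (hjstar : IsLeast {j : Fin m |
      1 - δ ≤ ∑ k ∈ Finset.range ((j : ℕ) + 1),
        (m.choose k : ℝ) * (1 - ε) ^ k * ε ^ (m - k)} jstar) :
    ENNReal.ofReal (1 - δ) ≤
      μ {ω | q ≤ G (Tuple.sort (fun i => G i ω) jstar) ω} :=
  prob_order_stat_jstar_ge_quantile_general μ m ε δ hε0 hε1 q G hGmeas hindep hlt jstar hjstar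
end

section
/- Let d be a positive integer, M ∈ ℂ^{d×d} a Hermitian matrix, ĥ ∈ ℂ^d, B ∈ ℂ^{d×d}, and let H = [ĥ B] ∈ ℂ^{d×(d+1)} be the matrix whose first column is ĥ and whose remaining columns are B. Let σ² > 0 and λ ≥ 0, and let Q ∈ ℂ^{(d+1)×(d+1)} be the block diagonal Hermitian matrix with top-left entry λ + σ² and lower-right block −λ I_d. If H^H M H − Q is positive semidefinite, then for every u ∈ ℂ^d with ‖u‖₂ ≤ 1, the real number (ĥ + B u)^H M (ĥ + B u) is at least σ². -/
/-! Testing the positive semidefinite form `Hᴴ M H - Q` against the lifted vector `(1, u)`, which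
`H` maps to `ĥ + B u`, gives `(ĥ + B u)ᴴ M (ĥ + B u) ≥ λ + σ² - λ ‖u‖² ≥ σ²`; positivity in the
complex order also forces the form to be real. -/

open Matrix
open scoped ComplexOrder

namespace Matrix

variable {m n R : Type*}

lemma star_dotProduct_conjTranspose_mul_mul_mulVec [Fintype m] [Fintype n] [CommSemiring R]
    [StarRing R] (A : Matrix m m R) (B : Matrix m n R) (x : n → R) :
    star x ⬝ᵥ (Bᴴ * A * B) *ᵥ x = star (B *ᵥ x) ⬝ᵥ A *ᵥ (B *ᵥ x) := by
  rw [← mulVec_mulVec, ← mulVec_mulVec, dotProduct_mulVec, ← star_mulVec]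

lemma of_cons_mulVec_cons [CommSemiring R] {k : ℕ} (a : m → R) (B : Matrix m (Fin k) R)
    (c : R) (u : Fin k → R) :
    (of fun i => Fin.cons (a i) (B i) : Matrix m (Fin (k + 1)) R) *ᵥ Fin.cons c u =
      c • a + B *ᵥ u := by
  ext i
  simp [mulVec, dotProduct, Fin.sum_univ_succ, mul_comm]

lemma of_ite_eq_diagonal_cons [Zero R] {k : ℕ} (a b : R) :
    (of fun i j : Fin (k + 1) => if i = 0 ∧ j = 0 then a else if i = j then b else 0) =
      diagonal (Fin.cons a fun _ => b) := by
  ext i j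
  refine Fin.cases ?_ (fun i => ?_) i <;> refine Fin.cases ?_ (fun j => ?_) j <;>
    simp [diagonal, Fin.succ_ne_zero, eq_comm (a := (0 : Fin (k + 1)))]

lemma star_cons_dotProduct_diagonal_cons_mulVec_cons [CommSemiring R] [StarRing R] {k : ℕ}
    (x a b : R) (u : Fin k → R) :
    star (Fin.cons x u : Fin (k + 1) → R) ⬝ᵥ diagonal (Fin.cons a fun _ => b) *ᵥ Fin.cons x u =
      star x * a * x + b * (star u ⬝ᵥ u) := by
  simp [dotProduct, mulVec_diagonal, Fin.sum_univ_succ, Finset.mul_sum, mul_assoc, mul_left_comm]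

end Matrix

lemma Complex.star_dotProduct_self {n : Type*} [Fintype n] (u : n → ℂ) :
    star u ⬝ᵥ u = ((∑ i, ‖u i‖ ^ 2 : ℝ) : ℂ) := by
  simp [dotProduct, Complex.conj_mul']

theorem s_procedure_sufficiency_general
    (d : ℕ)
    (M : Matrix (Fin d) (Fin d) ℂ)
    (hhat : Fin d → ℂ) (B : Matrix (Fin d) (Fin d) ℂ)
    (σsq lam : ℝ) (hlam : 0 ≤ lam)
    (H : Matrix (Fin d) (Fin (d + 1)) ℂ)
    (hH : H = Matrix.of fun i => Fin.cons (hhat i) (B i))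
    (Q : Matrix (Fin (d + 1)) (Fin (d + 1)) ℂ)
    (hQ : Q = Matrix.of fun i j =>
      if i = 0 ∧ j = 0 then ((lam + σsq : ℝ) : ℂ)
      else if i = j then -(lam : ℂ) else 0)
    (hPSD : (Hᴴ * M * H - Q).PosSemidef) :
    ∀ u : Fin d → ℂ, Real.sqrt (∑ i, ‖u i‖ ^ 2) ≤ 1 →
      σsq ≤ (star (hhat + B *ᵥ u) ⬝ᵥ M *ᵥ (hhat + B *ᵥ u)).re ∧
      (star (hhat + B *ᵥ u) ⬝ᵥ M *ᵥ (hhat + B *ᵥ u)).im = 0 := by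
  intro u hu
  have hnorm : ∑ i, ‖u i‖ ^ 2 ≤ 1 := Real.sqrt_le_one.mp hu
  have key := hPSD.dotProduct_mulVec_nonneg (Fin.cons 1 u)
  rw [sub_mulVec, dotProduct_sub, star_dotProduct_conjTranspose_mul_mul_mulVec, hH,
    of_cons_mulVec_cons, one_smul, hQ, of_ite_eq_diagonal_cons,
    star_cons_dotProduct_diagonal_cons_mulVec_cons, Complex.star_dotProduct_self, sub_nonneg,
    star_one, one_mul, mul_one, ← Complex.ofReal_neg, ← Complex.ofReal_mul, ← Complex.ofReal_add,
    Complex.le_def, Complex.ofReal_re, Complex.ofReal_im] at key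
  have hshrink : lam * ∑ i, ‖u i‖ ^ 2 ≤ lam := mul_le_of_le_one_right hlam hnorm
  exact ⟨by linarith [key.1], key.2.symm⟩

/-- **S-procedure, sufficiency direction.** Let `M ∈ ℂ^{d×d}` be Hermitian,
`ĥ ∈ ℂ^d`, `B ∈ ℂ^{d×d}`, and `H = [ĥ B] ∈ ℂ^{d×(d+1)}` (first column `ĥ`, remaining
columns `B`).  Let `σ² > 0`, `λ ≥ 0`, and `Q` the Hermitian block-diagonal matrix with
top-left entry `λ + σ²` and lower-right block `−λ I_d`.  If `H^H M H − Q ⪰ 0`, then for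
every `u ∈ ℂ^d` with `‖u‖₂ ≤ 1`, the real number `(ĥ + Bu)^H M (ĥ + Bu)` is at least
`σ²`. -/
theorem s_procedure_sufficiency
    (d : ℕ) (hd : 0 < d)
    (M : Matrix (Fin d) (Fin d) ℂ) (hM : M.IsHermitian)
    (hhat : Fin d → ℂ) (B : Matrix (Fin d) (Fin d) ℂ)
    (σsq lam : ℝ) (hσ : 0 < σsq) (hlam : 0 ≤ lam)
    (H : Matrix (Fin d) (Fin (d + 1)) ℂ)
    (hH : H = Matrix.of fun i => Fin.cons (hhat i) (B i))
    (Q : Matrix (Fin (d + 1)) (Fin (d + 1)) ℂ)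
    (hQ : Q = Matrix.of fun i j =>
      if i = 0 ∧ j = 0 then ((lam + σsq : ℝ) : ℂ)
      else if i = j then -(lam : ℂ) else 0)
    (hPSD : (Hᴴ * M * H - Q).PosSemidef) :
    ∀ u : Fin d → ℂ, Real.sqrt (∑ i, ‖u i‖ ^ 2) ≤ 1 →
      σsq ≤ (star (hhat + B *ᵥ u) ⬝ᵥ M *ᵥ (hhat + B *ᵥ u)).re ∧
      (star (hhat + B *ᵥ u) ⬝ᵥ M *ᵥ (hhat + B *ᵥ u)).im = 0 :=
  s_procedure_sufficiency_general d M hhat B σsq lam hlam H hH Q hQ hPSD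
end
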